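/- arXiv:2405.15181 — 5 statements merged into one kernel-verified Lean document; each statement's English description precedes it below -/
import Mathlib

section
/- A nondecreasing function with at most polynomial growth that satisfies f ≤ λ·f′ almost everywhere is identically zero: let a ∈ ℝ, λ > 0, K ≥ 0, m ∈ ℕ, and let f : ℝ → ℝ be nonnegative and nondecreasing with f(R) ≤ K·(1+|R|)^m for all R ≥ a. If for almost every R > a at which f is differentiable one has f(R) ≤ λ·f′(R), then f(R) = 0 for all R ≥ a. -/
/-!
Integrating `f ≤ λ f'` over `[x, x + λ]` and using that the integral of the derivative of a
monotone function is at most its increment gives `f (x + λ) ≥ 2 f x`. Hence `f` grows at least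
like `2 ^ (R / λ)`, which is incompatible with polynomial growth unless `f` vanishes.
-/

open MeasureTheory Set Filter

theorem Monotone.sub_mul_le_mul_sub_of_le_mul_deriv {f : ℝ → ℝ} (hf : Monotone f)
    {lam x y : ℝ} (hlam : 0 ≤ lam) (hxy : x ≤ y)
    (h : ∀ᵐ t, x < t → DifferentiableAt ℝ f t → f t ≤ lam * deriv f t) :
    (y - x) * f x ≤ lam * (f y - f x) := by
  have hint : IntervalIntegrable (deriv f) volume x y := (hf.monotoneOn _).intervalIntegrable_deriv
  have hderiv : ∫ t in x..y, deriv f t ≤ f y - f x := by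
    have := (hf.monotoneOn (uIcc x y)).intervalIntegral_deriv_mem_uIcc
    rw [uIcc_of_le (sub_nonneg.2 (hf hxy))] at this
    exact this.2
  have hpointwise : (fun _ ↦ f x) ≤ᵐ[volume.restrict (Icc x y)] fun t ↦ lam * deriv f t := by
    rw [EventuallyLE, ← restrict_Ioo_eq_restrict_Icc, ae_restrict_iff' measurableSet_Ioo]
    filter_upwards [h, hf.ae_differentiableAt] with t ht hdiff hmem
    exact (hf hmem.1.le).trans (ht hmem.1 hdiff)
  calc (y - x) * f x = ∫ _ in x..y, f x := by simp
    _ ≤ ∫ t in x..y, lam * deriv f t :=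
      intervalIntegral.integral_mono_ae_restrict hxy intervalIntegrable_const
        (hint.const_mul lam) hpointwise
    _ = lam * ∫ t in x..y, deriv f t := intervalIntegral.integral_const_mul _ _
    _ ≤ lam * (f y - f x) := mul_le_mul_of_nonneg_left hderiv hlam

theorem pow_mul_le_of_mul_le_add {f : ℝ → ℝ} {a c h : ℝ} (hc : 0 ≤ c) (hh : 0 ≤ h)
    (hstep : ∀ x, a ≤ x → c * f x ≤ f (x + h)) (n : ℕ) {x : ℝ} (hx : a ≤ x) :
    c ^ n * f x ≤ f (x + n * h) := by
  induction n with
  | zero => simp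
  | succ n ih =>
    calc c ^ (n + 1) * f x = c * (c ^ n * f x) := by ring
      _ ≤ c * f (x + n * h) := mul_le_mul_of_nonneg_left ih hc
      _ ≤ f (x + n * h + h) := hstep _ (by nlinarith [n.cast_nonneg (α := ℝ)])
      _ = f (x + (n + 1 : ℕ) * h) := by push_cast; congr 1; ring

theorem nonpos_of_eventually_mul_pow_le_mul_pow {r c C : ℝ} {m : ℕ} (hr : 1 < r)
    (h : ∀ᶠ n : ℕ in atTop, r ^ n * c ≤ C * n ^ m) : c ≤ 0 := by
  have hlim : Tendsto (fun n : ℕ ↦ C * (n ^ m / r ^ n)) atTop (nhds 0) := by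
    simpa using (tendsto_pow_const_div_const_pow_of_one_lt m hr).const_mul C
  refine ge_of_tendsto hlim ?_
  filter_upwards [h] with n hn
  rw [mul_div_assoc', le_div_iff₀ (by positivity), mul_comm]
  exact hn

/-- A nondecreasing nonnegative function with at most polynomial growth that satisfies
`f ≤ λ·f′` almost everywhere on `(a, ∞)` (at points of differentiability) is
identically zero on `[a, ∞)`. -/
theorem eq_zero_of_le_lambda_mul_deriv
    (a lam K : ℝ) (hlam : 0 < lam) (hK : 0 ≤ K) (m : ℕ) (f : ℝ → ℝ)
    (hf_nonneg : ∀ R, 0 ≤ f R) (hf_mono : Monotone f)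
    (hf_growth : ∀ R, a ≤ R → f R ≤ K * (1 + |R|) ^ m)
    (hdiff_ineq : ∀ᵐ R ∂MeasureTheory.volume,
      a < R → DifferentiableAt ℝ f R → f R ≤ lam * deriv f R) :
    ∀ R, a ≤ R → f R = 0 := by
  have hdouble : ∀ x, a ≤ x → 2 * f x ≤ f (x + lam) := by
    intro x hx
    have := hf_mono.sub_mul_le_mul_sub_of_le_mul_deriv hlam.le (le_add_of_nonneg_right hlam.le)
      (hdiff_ineq.mono fun t ht hxt ↦ ht (hx.trans_lt hxt))
    nlinarith
  intro R hR
  refine le_antisymm (nonpos_of_eventually_mul_pow_le_mul_pow (m := m)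
    (C := K * (1 + |R| + lam) ^ m) one_lt_two ?_) (hf_nonneg R)
  filter_upwards [eventually_ge_atTop 1] with n hn
  have hn' : (1 : ℝ) ≤ n := Nat.one_le_cast.2 hn
  have hlinear : 1 + |R + n * lam| ≤ (1 + |R| + lam) * n := by
    have := abs_add_le R (n * lam)
    rw [abs_of_pos (by positivity : 0 < n * lam)] at this
    nlinarith [abs_nonneg R]
  calc 2 ^ n * f R ≤ f (R + n * lam) := pow_mul_le_of_mul_le_add zero_le_two hlam.le hdouble n hR
    _ ≤ K * (1 + |R + n * lam|) ^ m := hf_growth _ (by nlinarith)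
    _ ≤ K * ((1 + |R| + lam) * n) ^ m := by gcongr
    _ = K * (1 + |R| + lam) ^ m * n ^ m := by rw [mul_pow, mul_assoc]
end

section
/- Hölder continuity on a product from slice-wise estimates: let (Y, d) be a metric space, r₀ > 0, γ ∈ (0,1], C ≥ 0, M ≥ 0, and let u : Y × (0, r₀] → ℝ satisfy: (a) |u(y,r)| ≤ M for all y ∈ Y, r ∈ (0,r₀]; (b) |u(y₁,r) − u(y₂,r)| ≤ C·r^{γ−1}·d(y₁,y₂) for all y₁, y₂ ∈ Y and r ∈ (0,r₀]; (c) |u(y,r₁) − u(y,r₂)| ≤ C·|r₁^γ − r₂^γ| for all y ∈ Y and r₁, r₂ ∈ (0,r₀]. Then there exists C′ ≥ 0, depending only on C, γ, M, r₀, such that |u(y₁,r₁) − u(y₂,r₂)| ≤ C′·(d(y₁,y₂)^γ + |r₁ − r₂|^γ) for all y₁, y₂ ∈ Y and r₁, r₂ ∈ (0, r₀/2]; in particular u extends to a γ-Hölder continuous function on Y × [0, r₀/2]. -/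
/-!
Fix a radius `r` and put `d = dist y₁ y₂`. If `d ≤ r₀`, pass from `u y₁ r` to `u y₂ r` through the
radius `s = max r d`: the radial moves cost `C d ^ γ` by (c) and `|a ^ γ - b ^ γ| ≤ |a - b| ^ γ`,
and the move in `Y` at radius `s ≥ d` costs `C s ^ (γ - 1) d ≤ C d ^ γ` by (b); if `d > r₀`, the
bound (a) suffices. Together with (c) this is the joint estimate on `Y × (0, r₀]`. It makes every
slice `u y` uniformly continuous, so `u y` extends continuously to the closure `[0, r₀/2]`, and the
estimate passes to the limit.
-/

open Set Filter Topology
open scoped NNReal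

namespace Real

lemma abs_rpow_sub_rpow_le {γ a b : ℝ} (hγ0 : 0 ≤ γ) (hγ1 : γ ≤ 1) (ha : 0 ≤ a) (hb : 0 ≤ b) :
    |a ^ γ - b ^ γ| ≤ |a - b| ^ γ := by
  wlog hba : b ≤ a generalizing a b
  · rw [abs_sub_comm, abs_sub_comm a]
    exact this hb ha (le_of_not_ge hba)
  have hsub : a ^ γ ≤ (a - b) ^ γ + b ^ γ := by
    simpa using rpow_add_le_add_rpow (sub_nonneg.2 hba) hb hγ0 hγ1
  rw [abs_of_nonneg (sub_nonneg.2 (rpow_le_rpow hb hba hγ0)), abs_of_nonneg (sub_nonneg.2 hba)]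
  linarith

lemma rpow_sub_one_mul_le_rpow {γ d s : ℝ} (hγ : γ ≤ 1) (hd : 0 ≤ d) (hds : d ≤ s) :
    s ^ (γ - 1) * d ≤ d ^ γ := by
  rcases hd.eq_or_lt with rfl | hd
  · simpa using rpow_nonneg le_rfl γ
  calc s ^ (γ - 1) * d ≤ d ^ (γ - 1) * d :=
        mul_le_mul_of_nonneg_right (rpow_le_rpow_of_nonpos hd hds (by linarith)) hd.le
    _ = d ^ γ := by rw [rpow_sub_one hd.ne', div_mul_cancel₀ _ hd.ne']

end Real

lemma holderOnWith_of_dist_le {X E : Type*} [PseudoMetricSpace X] [PseudoMetricSpace E]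
    {C r : ℝ≥0} {f : X → E} {s : Set X}
    (h : ∀ x ∈ s, ∀ y ∈ s, dist (f x) (f y) ≤ C * dist x y ^ (r : ℝ)) :
    HolderOnWith C r f s := by
  intro x hx y hy
  have := ENNReal.ofReal_le_ofReal (h x hx y hy)
  rwa [ENNReal.ofReal_mul C.coe_nonneg, ← ENNReal.ofReal_rpow_of_nonneg dist_nonneg r.coe_nonneg,
    ENNReal.ofReal_coe_nnreal, ← edist_dist, ← edist_dist] at this

lemma UniformContinuousOn.exists_tendsto_nhdsWithin {α β : Type*} [UniformSpace α]
    [UniformSpace β] [CompleteSpace β] {f : α → β} {s : Set α} (hf : UniformContinuousOn f s)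
    {x : α} (hx : x ∈ closure s) : ∃ y, Tendsto f (𝓝[s] x) (𝓝 y) :=
  have := mem_closure_iff_nhdsWithin_neBot.mp hx
  cauchy_map_iff_exists_tendsto.mp
    ((cauchy_nhds.mono nhdsWithin_le_nhds).map_of_le hf inf_le_right)

lemma UniformContinuousOn.continuousOn_extendFrom_closure {α β : Type*} [UniformSpace α]
    [UniformSpace β] [CompleteSpace β] {f : α → β} {s : Set α} (hf : UniformContinuousOn f s) :
    ContinuousOn (extendFrom s f) (closure s) :=
  continuousOn_extendFrom subset_rfl fun _ hx ↦ hf.exists_tendsto_nhdsWithin hx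

lemma dist_le_on_closure {X E : Type*} [PseudoMetricSpace X] [PseudoMetricSpace E]
    {f g : X → E} {s : Set X} {K c γ : ℝ} (hγ : 0 ≤ γ)
    (hf : ContinuousOn f (closure s)) (hg : ContinuousOn g (closure s))
    (h : ∀ a ∈ s, ∀ b ∈ s, dist (f a) (g b) ≤ K * (c + dist a b ^ γ)) :
    ∀ a ∈ closure s, ∀ b ∈ closure s, dist (f a) (g b) ≤ K * (c + dist a b ^ γ) := by
  intro a ha b hb
  refine le_on_closure (s := s ×ˢ s) (f := fun p ↦ dist (f p.1) (g p.2))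
    (g := fun p ↦ K * (c + dist p.1 p.2 ^ γ)) (fun p hp ↦ h _ hp.1 _ hp.2) ?_ ?_
    (x := (a, b)) (by rw [closure_prod_eq]; exact ⟨ha, hb⟩)
  · rw [closure_prod_eq]
    exact continuous_dist.comp_continuousOn
      ((hf.comp continuousOn_fst fun _ hp ↦ (mem_prod.1 hp).1).prodMk
        (hg.comp continuousOn_snd fun _ hp ↦ (mem_prod.1 hp).2))
  · exact (continuous_const.mul (continuous_const.add
      ((continuous_fst.dist continuous_snd).rpow_const fun _ ↦ Or.inr hγ))).continuousOn

section Slicewise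

variable {Y : Type*} {u : Y → ℝ → ℝ} {r₀ γ C M : ℝ}

lemma abs_sub_le_mul_abs_sub_rpow (hγ0 : 0 ≤ γ) (hγ1 : γ ≤ 1) (hC : 0 ≤ C)
    (hc : ∀ y : Y, ∀ r₁ ∈ Ioc (0 : ℝ) r₀, ∀ r₂ ∈ Ioc (0 : ℝ) r₀,
      |u y r₁ - u y r₂| ≤ C * |r₁ ^ γ - r₂ ^ γ|)
    (y : Y) {r₁ r₂ : ℝ} (hr₁ : r₁ ∈ Ioc 0 r₀) (hr₂ : r₂ ∈ Ioc 0 r₀) :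
    |u y r₁ - u y r₂| ≤ C * |r₁ - r₂| ^ γ :=
  (hc y r₁ hr₁ r₂ hr₂).trans <| mul_le_mul_of_nonneg_left
    (Real.abs_rpow_sub_rpow_le hγ0 hγ1 hr₁.1.le hr₂.1.le) hC

variable [PseudoMetricSpace Y]

lemma abs_sub_le_of_dist_le (hγ0 : 0 ≤ γ) (hγ1 : γ ≤ 1) (hC : 0 ≤ C)
    (hb : ∀ y₁ y₂ : Y, ∀ r ∈ Ioc (0 : ℝ) r₀, |u y₁ r - u y₂ r| ≤ C * r ^ (γ - 1) * dist y₁ y₂)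
    (hc : ∀ y : Y, ∀ r₁ ∈ Ioc (0 : ℝ) r₀, ∀ r₂ ∈ Ioc (0 : ℝ) r₀,
      |u y r₁ - u y r₂| ≤ C * |r₁ ^ γ - r₂ ^ γ|)
    {y₁ y₂ : Y} {r : ℝ} (hr : r ∈ Ioc 0 r₀) (hd : dist y₁ y₂ ≤ r₀) :
    |u y₁ r - u y₂ r| ≤ 3 * C * dist y₁ y₂ ^ γ := by
  set d := dist y₁ y₂
  set s := max r d
  have hs : s ∈ Ioc 0 r₀ := ⟨hr.1.trans_le (le_max_left _ _), max_le hr.2 hd⟩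
  have vertical (y : Y) : |u y r - u y s| ≤ C * d ^ γ := by
    refine (abs_sub_le_mul_abs_sub_rpow hγ0 hγ1 hC hc y hr hs).trans ?_
    gcongr
    rw [abs_sub_comm, abs_of_nonneg (sub_nonneg.2 (le_max_left _ _))]
    rw [sub_le_iff_le_add]
    exact max_le (le_add_of_nonneg_left dist_nonneg) (le_add_of_nonneg_right hr.1.le)
  have horizontal : |u y₁ s - u y₂ s| ≤ C * d ^ γ := by
    calc |u y₁ s - u y₂ s| ≤ C * (s ^ (γ - 1) * d) := by rw [← mul_assoc]; exact hb y₁ y₂ s hs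
      _ ≤ C * d ^ γ := by
        gcongr; exact Real.rpow_sub_one_mul_le_rpow hγ1 dist_nonneg (le_max_right _ _)
  linarith [abs_sub_le (u y₁ r) (u y₁ s) (u y₂ r), abs_sub_le (u y₁ s) (u y₂ s) (u y₂ r),
    abs_sub_comm (u y₂ s) (u y₂ r), vertical y₁, vertical y₂]

lemma abs_sub_le_of_le_dist (hr₀ : 0 < r₀) (hγ0 : 0 ≤ γ) (hM : 0 ≤ M)
    (ha : ∀ y : Y, ∀ r ∈ Ioc (0 : ℝ) r₀, |u y r| ≤ M)
    {y₁ y₂ : Y} {r : ℝ} (hr : r ∈ Ioc 0 r₀) (hd : r₀ ≤ dist y₁ y₂) :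
    |u y₁ r - u y₂ r| ≤ 2 * M / r₀ ^ γ * dist y₁ y₂ ^ γ := by
  have hr₀γ : 0 < r₀ ^ γ := Real.rpow_pos_of_pos hr₀ γ
  calc |u y₁ r - u y₂ r| ≤ |u y₁ r| + |u y₂ r| := abs_sub _ _
    _ ≤ 2 * M / r₀ ^ γ * r₀ ^ γ := by
      rw [div_mul_cancel₀ _ hr₀γ.ne']; linarith [ha y₁ r hr, ha y₂ r hr]
    _ ≤ 2 * M / r₀ ^ γ * dist y₁ y₂ ^ γ := by gcongr

lemma abs_sub_le_mul_dist_rpow (hr₀ : 0 < r₀) (hγ0 : 0 ≤ γ) (hγ1 : γ ≤ 1) (hC : 0 ≤ C)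
    (hM : 0 ≤ M) (ha : ∀ y : Y, ∀ r ∈ Ioc (0 : ℝ) r₀, |u y r| ≤ M)
    (hb : ∀ y₁ y₂ : Y, ∀ r ∈ Ioc (0 : ℝ) r₀, |u y₁ r - u y₂ r| ≤ C * r ^ (γ - 1) * dist y₁ y₂)
    (hc : ∀ y : Y, ∀ r₁ ∈ Ioc (0 : ℝ) r₀, ∀ r₂ ∈ Ioc (0 : ℝ) r₀,
      |u y r₁ - u y r₂| ≤ C * |r₁ ^ γ - r₂ ^ γ|)
    (y₁ y₂ : Y) {r : ℝ} (hr : r ∈ Ioc 0 r₀) :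
    |u y₁ r - u y₂ r| ≤ (3 * C + 2 * M / r₀ ^ γ) * dist y₁ y₂ ^ γ := by
  have hdγ : 0 ≤ dist y₁ y₂ ^ γ := Real.rpow_nonneg dist_nonneg γ
  have hMγ : 0 ≤ 2 * M / r₀ ^ γ * dist y₁ y₂ ^ γ := by positivity
  rcases le_total (dist y₁ y₂) r₀ with hd | hd
  · linarith [abs_sub_le_of_dist_le hγ0 hγ1 hC hb hc hr hd]
  · linarith [abs_sub_le_of_le_dist hr₀ hγ0 hM ha hr hd, mul_nonneg (by positivity : 0 ≤ 3 * C) hdγ]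

lemma abs_sub_le_mul_rpow_add_rpow (hr₀ : 0 < r₀) (hγ0 : 0 ≤ γ) (hγ1 : γ ≤ 1) (hC : 0 ≤ C)
    (hM : 0 ≤ M) (ha : ∀ y : Y, ∀ r ∈ Ioc (0 : ℝ) r₀, |u y r| ≤ M)
    (hb : ∀ y₁ y₂ : Y, ∀ r ∈ Ioc (0 : ℝ) r₀, |u y₁ r - u y₂ r| ≤ C * r ^ (γ - 1) * dist y₁ y₂)
    (hc : ∀ y : Y, ∀ r₁ ∈ Ioc (0 : ℝ) r₀, ∀ r₂ ∈ Ioc (0 : ℝ) r₀,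
      |u y r₁ - u y r₂| ≤ C * |r₁ ^ γ - r₂ ^ γ|)
    (y₁ y₂ : Y) {r₁ r₂ : ℝ} (hr₁ : r₁ ∈ Ioc 0 r₀) (hr₂ : r₂ ∈ Ioc 0 r₀) :
    |u y₁ r₁ - u y₂ r₂| ≤ (4 * C + 2 * M / r₀ ^ γ) * (dist y₁ y₂ ^ γ + |r₁ - r₂| ^ γ) := by
  have hd : 0 ≤ dist y₁ y₂ ^ γ := Real.rpow_nonneg dist_nonneg γ
  have hr : 0 ≤ |r₁ - r₂| ^ γ := Real.rpow_nonneg (abs_nonneg _) γ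
  have hK : 0 ≤ 2 * M / r₀ ^ γ := by positivity
  calc |u y₁ r₁ - u y₂ r₂| ≤ |u y₁ r₁ - u y₁ r₂| + |u y₁ r₂ - u y₂ r₂| := abs_sub_le _ _ _
    _ ≤ C * |r₁ - r₂| ^ γ + (3 * C + 2 * M / r₀ ^ γ) * dist y₁ y₂ ^ γ :=
      add_le_add (abs_sub_le_mul_abs_sub_rpow hγ0 hγ1 hC hc y₁ hr₁ hr₂)
        (abs_sub_le_mul_dist_rpow hr₀ hγ0 hγ1 hC hM ha hb hc y₁ y₂ hr₂)
    _ ≤ (4 * C + 2 * M / r₀ ^ γ) * (dist y₁ y₂ ^ γ + |r₁ - r₂| ^ γ) := by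
      nlinarith [mul_nonneg hC hd, mul_nonneg hC hr, mul_nonneg hK hr]

end Slicewise

/-- Hölder continuity on a product from slice-wise estimates: uniform boundedness,
a Hölder-type estimate in the `Y` variable with weight `r^{γ−1}`, and a
`|r₁^γ − r₂^γ|` estimate in the radial variable together imply a joint
`γ`-Hölder estimate on `Y × (0, r₀/2]`, and `u` extends to a `γ`-Hölder continuous
function on `Y × [0, r₀/2]`. -/
theorem holder_from_slicewise_estimates
    {Y : Type*} [MetricSpace Y] (r₀ γ C M : ℝ)
    (hr₀ : 0 < r₀) (hγ : γ ∈ Set.Ioc (0:ℝ) 1) (hC : 0 ≤ C) (hM : 0 ≤ M)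
    (u : Y → ℝ → ℝ)
    (ha : ∀ y : Y, ∀ r ∈ Set.Ioc (0:ℝ) r₀, |u y r| ≤ M)
    (hb : ∀ y₁ y₂ : Y, ∀ r ∈ Set.Ioc (0:ℝ) r₀,
      |u y₁ r - u y₂ r| ≤ C * r ^ (γ - 1) * dist y₁ y₂)
    (hc : ∀ y : Y, ∀ r₁ ∈ Set.Ioc (0:ℝ) r₀, ∀ r₂ ∈ Set.Ioc (0:ℝ) r₀,
      |u y r₁ - u y r₂| ≤ C * |r₁ ^ γ - r₂ ^ γ|) :
    ∃ C' : ℝ, 0 ≤ C' ∧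
      (∀ y₁ y₂ : Y, ∀ r₁ ∈ Set.Ioc (0:ℝ) (r₀/2), ∀ r₂ ∈ Set.Ioc (0:ℝ) (r₀/2),
        |u y₁ r₁ - u y₂ r₂| ≤ C' * (dist y₁ y₂ ^ γ + |r₁ - r₂| ^ γ)) ∧
      ∃ v : Y → ℝ → ℝ,
        (∀ y : Y, ∀ r ∈ Set.Ioc (0:ℝ) (r₀/2), v y r = u y r) ∧
        (∀ y₁ y₂ : Y, ∀ r₁ ∈ Set.Icc (0:ℝ) (r₀/2), ∀ r₂ ∈ Set.Icc (0:ℝ) (r₀/2),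
          |v y₁ r₁ - v y₂ r₂| ≤ C' * (dist y₁ y₂ ^ γ + |r₁ - r₂| ^ γ)) := by
  obtain ⟨hγ0, hγ1⟩ := hγ
  set s := Ioc (0 : ℝ) (r₀ / 2)
  have hs : s ⊆ Ioc 0 r₀ := Ioc_subset_Ioc_right (by linarith)
  have hjoint (y₁ y₂ : Y) (r₁ : ℝ) (h₁ : r₁ ∈ s) (r₂ : ℝ) (h₂ : r₂ ∈ s) :=
    abs_sub_le_mul_rpow_add_rpow hr₀ hγ0.le hγ1 hC hM ha hb hc y₁ y₂ (hs h₁) (hs h₂)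
  have huc (y : Y) : UniformContinuousOn (u y) s :=
    HolderOnWith.uniformContinuousOn (C := ⟨C, hC⟩) (r := ⟨γ, hγ0.le⟩)
      (holderOnWith_of_dist_le fun r₁ h₁ r₂ h₂ ↦ by
        rw [Real.dist_eq, Real.dist_eq]
        exact abs_sub_le_mul_abs_sub_rpow hγ0.le hγ1 hC hc y (hs h₁) (hs h₂))
      hγ0
  have hext (y : Y) : EqOn (extendFrom s (u y)) (u y) s := extendFrom_extends (huc y).continuousOn
  refine ⟨_, by positivity, hjoint, fun y ↦ extendFrom s (u y), hext, ?_⟩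
  rw [← closure_Ioc (by linarith : (0 : ℝ) ≠ r₀ / 2)]
  intro y₁ y₂ r₁ h₁ r₂ h₂
  simpa only [Real.dist_eq] using dist_le_on_closure hγ0.le
    (huc y₁).continuousOn_extendFrom_closure (huc y₂).continuousOn_extendFrom_closure
    (fun a ha b hb ↦ by simpa only [hext _ ha, hext _ hb, Real.dist_eq] using hjoint y₁ y₂ a ha b hb)
    r₁ h₁ r₂ h₂
end

section
/- Convergence of sub-level sets under locally uniform convergence: let X be a locally compact, σ-compact metric space, μ a Borel measure on X that is finite on compact sets, and t ∈ ℝ. Let u_i, u : X → ℝ be continuous functions with u_i → u locally uniformly, and let E ⊆ X be a measurable set such that μ(({u_i < t} Δ E) ∩ K) → 0 as i → ∞ for every compact K ⊆ X. Then μ({u < t} ∖ E) = 0 and μ(E ∖ {u ≤ t}) = 0; that is, {u < t} ⊆ E ⊆ {u ≤ t} up to μ-measure zero. -/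
/-!
On a compact set `K` the `u i` converge uniformly, so for levels `s < t < s'` and all large `i`
the sets `{v < s} ∖ E` and `E ∩ {s' < v}` lie in `{u i < t} ∆ E` inside `K`; their measure in `K`
is thus bounded by a sequence tending to zero. Exhausting `{v < t}` and `{t < v}` by countably many
such levels, and `X` by countably many compact sets, shows that both sets are null.
-/

open MeasureTheory Filter Topology Set

section MeasureNull

variable {X : Type*} [MeasurableSpace X] {μ : Measure X}

theorem measure_eq_zero_of_eventually_subset {ι : Type*} {l : Filter ι} [l.NeBot]
    {S : Set X} {D : ι → Set X} (hD : Tendsto (fun i => μ (D i)) l (𝓝 0))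
    (hS : ∀ᶠ i in l, S ⊆ D i) : μ S = 0 :=
  nonpos_iff_eq_zero.1 <| ge_of_tendsto hD <| hS.mono fun _ h => measure_mono h

theorem measure_eq_zero_of_forall_isCompact_inter [TopologicalSpace X] [SigmaCompactSpace X]
    {S : Set X} (h : ∀ K, IsCompact K → μ (S ∩ K) = 0) : μ S = 0 := by
  rw [← inter_univ S, ← iUnion_compactCovering X, inter_iUnion]
  exact measure_iUnion_null fun n => h _ (isCompact_compactCovering X n)

variable {α : Type*} [LinearOrder α] [TopologicalSpace α] [OrderTopology α] [DenselyOrdered α]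
  [FirstCountableTopology α] {f : X → α} {t : α} {S : Set X}

theorem measure_setOf_lt_inter_eq_zero [NoMinOrder α]
    (h : ∀ s < t, μ ({x | f x < s} ∩ S) = 0) : μ ({x | f x < t} ∩ S) = 0 := by
  obtain ⟨a, -, hat, ha⟩ := exists_seq_strictMono_tendsto t
  refine measure_mono_null ?_ (measure_iUnion_null fun n => h (a n) (hat n))
  rintro x ⟨hxt, hxS⟩
  obtain ⟨n, hn⟩ := (ha.eventually (lt_mem_nhds hxt)).exists
  exact mem_iUnion.2 ⟨n, hn, hxS⟩

theorem measure_setOf_gt_inter_eq_zero [NoMaxOrder α]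
    (h : ∀ s > t, μ ({x | s < f x} ∩ S) = 0) : μ ({x | t < f x} ∩ S) = 0 :=
  measure_setOf_lt_inter_eq_zero (α := αᵒᵈ) h

end MeasureNull

section UniformLimit

variable {ι α : Type*} {p : Filter ι} {F : ι → α → ℝ} {f : α → ℝ} {K : Set α} {s t : ℝ}

theorem TendstoUniformlyOn.eventually_forall_lt_of_lt (h : TendstoUniformlyOn F f p K)
    (hst : s < t) : ∀ᶠ i in p, ∀ x ∈ K, f x < s → F i x < t := by
  filter_upwards [Metric.tendstoUniformlyOn_iff.1 h (t - s) (sub_pos.2 hst)] with i hi x hx hxs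
  have := hi x hx
  rw [Real.dist_eq, abs_lt] at this
  linarith

theorem TendstoUniformlyOn.eventually_forall_lt_of_gt (h : TendstoUniformlyOn F f p K)
    (hts : t < s) : ∀ᶠ i in p, ∀ x ∈ K, s < f x → t < F i x := by
  filter_upwards [Metric.tendstoUniformlyOn_iff.1 h (s - t) (sub_pos.2 hts)] with i hi x hx hxs
  have := hi x hx
  rw [Real.dist_eq, abs_lt] at this
  linarith

end UniformLimit

theorem sublevel_sets_converge_of_tendstoLocallyUniformly_general
    {X : Type*} [MetricSpace X] [SigmaCompactSpace X]
    [MeasurableSpace X]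
    (μ : MeasureTheory.Measure X)
    (t : ℝ) (u : ℕ → X → ℝ) (v : X → ℝ)
    (hconv : TendstoLocallyUniformly u v Filter.atTop)
    (E : Set X)
    (hL1 : ∀ K : Set X, IsCompact K →
      Filter.Tendsto (fun i => μ ((symmDiff {x | u i x < t} E) ∩ K))
        Filter.atTop (nhds 0)) :
    μ ({x | v x < t} \ E) = 0 ∧ μ (E \ {x | v x ≤ t}) = 0 := by
  have hunif (K : Set X) (hK : IsCompact K) : TendstoUniformlyOn u v atTop K :=
    (tendstoLocallyUniformlyOn_iff_tendstoUniformlyOn_of_compact hK).1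
      hconv.tendstoLocallyUniformlyOn
  constructor
  · refine measure_eq_zero_of_forall_isCompact_inter fun K hK => ?_
    rw [sdiff_eq, inter_assoc]
    refine measure_setOf_lt_inter_eq_zero fun s hs =>
      measure_eq_zero_of_eventually_subset (hL1 K hK) ?_
    filter_upwards [(hunif K hK).eventually_forall_lt_of_lt hs] with i hi x ⟨hxs, hxE, hxK⟩
    exact ⟨Or.inl ⟨hi x hxK hxs, hxE⟩, hxK⟩
  · refine measure_eq_zero_of_forall_isCompact_inter fun K hK => ?_
    have hset : (E \ {x | v x ≤ t}) ∩ K = {x | t < v x} ∩ (E ∩ K) := by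
      ext x
      simp only [mem_inter_iff, Set.mem_sdiff, mem_ofPred_eq, not_le]
      tauto
    rw [hset]
    refine measure_setOf_gt_inter_eq_zero fun s hs =>
      measure_eq_zero_of_eventually_subset (hL1 K hK) ?_
    filter_upwards [(hunif K hK).eventually_forall_lt_of_gt hs] with i hi x ⟨hxs, hxE, hxK⟩
    exact ⟨Or.inr ⟨hxE, (hi x hxK hxs).not_gt⟩, hxK⟩

/-- Convergence of sub-level sets under locally uniform convergence: if `u_i → v`
locally uniformly and the sub-level sets `{u_i < t}` converge to `E` in `L¹_loc`
(i.e. the measure of the symmetric difference in each compact set tends to zero),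
then `{v < t} ⊆ E ⊆ {v ≤ t}` up to `μ`-measure zero. -/
theorem sublevel_sets_converge_of_tendstoLocallyUniformly
    {X : Type*} [MetricSpace X] [LocallyCompactSpace X] [SigmaCompactSpace X]
    [MeasurableSpace X] [BorelSpace X]
    (μ : MeasureTheory.Measure X) [MeasureTheory.IsFiniteMeasureOnCompacts μ]
    (t : ℝ) (u : ℕ → X → ℝ) (v : X → ℝ)
    (hu : ∀ i, Continuous (u i)) (hv : Continuous v)
    (hconv : TendstoLocallyUniformly u v Filter.atTop)
    (E : Set X) (hE : MeasurableSet E)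
    (hL1 : ∀ K : Set X, IsCompact K →
      Filter.Tendsto (fun i => μ ((symmDiff {x | u i x < t} E) ∩ K))
        Filter.atTop (nhds 0)) :
    μ ({x | v x < t} \ E) = 0 ∧ μ (E \ {x | v x ≤ t}) = 0 :=
  sublevel_sets_converge_of_tendstoLocallyUniformly_general μ t u v hconv E hL1
end

section
/- The cycloid is a translating soliton of inverse mean curvature flow: define x, y : ℝ → ℝ by x(θ) = (1 − cos 2θ)/4 and y(θ) = (2θ − sin 2θ)/4. Then for every θ ∈ ℝ: x′(θ) = sin θ · cos θ, y′(θ) = sin²θ, and the identity (x′(θ)·y″(θ) − y′(θ)·x″(θ)) · y′(θ) = (x′(θ)² + y′(θ)²)² holds. For θ ∈ (0, π), this identity expresses that the signed curvature κ = (x′y″ − y′x″)/(x′² + y′²)^{3/2} and the normal component ⟨ν, e₁⟩ = y′/(x′² + y′²)^{1/2} satisfy 1/κ = ⟨ν, e₁⟩. -/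
/-!
The velocity of the cycloid is `(x', y') = sin θ · (cos θ, sin θ)`, so its speed is `|sin θ|`
and its tangent turns at unit rate: `x'y'' - y'x'' = sin² θ`. Both sides of the soliton
identity therefore equal `sin⁴ θ`.
-/

open Real

theorem hasDerivAt_one_sub_cos_two_mul_div_four (θ : ℝ) :
    HasDerivAt (fun t => (1 - cos (2 * t)) / 4) (sin θ * cos θ) θ :=
  (((hasDerivAt_id θ).const_mul 2).cos.const_sub 1).div_const 4 |>.congr_deriv <| by
    simp only [id, sin_two_mul]; ring

theorem hasDerivAt_two_mul_sub_sin_two_mul_div_four (θ : ℝ) :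
    HasDerivAt (fun t => (2 * t - sin (2 * t)) / 4) (sin θ ^ 2) θ := by
  have h2 := (hasDerivAt_id θ).const_mul 2
  refine ((h2.sub h2.sin).div_const 4).congr_deriv ?_
  simp only [id, cos_two_mul, cos_sq']
  ring

theorem hasDerivAt_sin_mul_cos (θ : ℝ) :
    HasDerivAt (fun t => sin t * cos t) (cos θ ^ 2 - sin θ ^ 2) θ :=
  ((hasDerivAt_sin θ).mul (hasDerivAt_cos θ)).congr_deriv (by ring)

theorem hasDerivAt_sin_sq (θ : ℝ) :
    HasDerivAt (fun t => sin t ^ 2) (2 * sin θ * cos θ) θ :=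
  ((hasDerivAt_sin θ).pow 2).congr_deriv (by ring)

/-- The cycloid is a translating soliton of inverse mean curvature flow: with
`x(θ) = (1 − cos 2θ)/4` and `y(θ) = (2θ − sin 2θ)/4`, one has
`x′(θ) = sin θ · cos θ`, `y′(θ) = sin²θ`, and the identity
`(x′y″ − y′x″)·y′ = (x′² + y′²)²`, which for `θ ∈ (0, π)` expresses the
translating soliton equation `1/κ = ⟨ν, e₁⟩`. -/
theorem cycloid_translating_soliton
    (x y : ℝ → ℝ)
    (hx : ∀ θ, x θ = (1 - Real.cos (2 * θ)) / 4)
    (hy : ∀ θ, y θ = (2 * θ - Real.sin (2 * θ)) / 4) :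
    ∀ θ : ℝ,
      deriv x θ = Real.sin θ * Real.cos θ ∧
      deriv y θ = Real.sin θ ^ 2 ∧
      (deriv x θ * deriv (deriv y) θ - deriv y θ * deriv (deriv x) θ) * deriv y θ
        = (deriv x θ ^ 2 + deriv y θ ^ 2) ^ 2 := by
  obtain rfl : x = _ := funext hx
  obtain rfl : y = _ := funext hy
  have hx' : deriv (fun t => (1 - cos (2 * t)) / 4) = fun t => sin t * cos t :=
    funext fun t => (hasDerivAt_one_sub_cos_two_mul_div_four t).deriv
  have hy' : deriv (fun t => (2 * t - sin (2 * t)) / 4) = fun t => sin t ^ 2 :=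
    funext fun t => (hasDerivAt_two_mul_sub_sin_two_mul_div_four t).deriv
  intro θ
  rw [hx', hy', (hasDerivAt_sin_mul_cos θ).deriv, (hasDerivAt_sin_sq θ).deriv]
  refine ⟨rfl, rfl, ?_⟩
  linear_combination -(sin θ ^ 4 * (sin θ ^ 2 + cos θ ^ 2)) * sin_sq_add_cos_sq θ
end

section
/- Derivative and support function of the homothetic IMCF soliton curve: let c < 1 with c ≠ 0, set s = √(1−c), and define γ : ℝ → ℂ by γ(θ) = s·cos(sθ)·e^{iθ} − sin(sθ)·i·e^{iθ}. Then for every θ ∈ ℝ: (i) γ′(θ) = c·sin(sθ)·e^{iθ}; (ii) Re(γ(θ) · conj(−i·e^{iθ})) = sin(sθ). -/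
/-- Derivative and support function of the homothetic IMCF soliton curve: for
`c < 1`, `c ≠ 0`, `s = √(1−c)` and `γ(θ) = s·cos(sθ)·e^{iθ} − sin(sθ)·i·e^{iθ}`,
one has (i) `γ′(θ) = c·sin(sθ)·e^{iθ}` and (ii) the support function
`Re(γ(θ)·conj(−i·e^{iθ})) = sin(sθ)`. -/
theorem homothetic_soliton_deriv_and_support
    (c : ℝ) (hc1 : c < 1) (hc0 : c ≠ 0) (s : ℝ) (hs : s = Real.sqrt (1 - c))
    (γ : ℝ → ℂ)
    (hγ : ∀ θ : ℝ, γ θ = (s : ℂ) * (Real.cos (s * θ) : ℂ) * Complex.exp (Complex.I * θ)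
        - (Real.sin (s * θ) : ℂ) * Complex.I * Complex.exp (Complex.I * θ)) :
    ∀ θ : ℝ,
      HasDerivAt γ ((c : ℂ) * (Real.sin (s * θ) : ℂ) * Complex.exp (Complex.I * θ)) θ ∧
      (γ θ * (starRingEnd ℂ) (-Complex.I * Complex.exp (Complex.I * θ))).re
        = Real.sin (s * θ) := by
  have hs2 : (s : ℂ) ^ 2 = 1 - (c : ℂ) := by
    have h : s ^ 2 = 1 - c := by
      rw [hs, Real.sq_sqrt (by linarith)]
    exact_mod_cast h
  have hfun : γ = fun θ : ℝ =>
      ((s : ℂ) * Complex.cos ((s : ℂ) * θ) - Complex.sin ((s : ℂ) * θ) * Complex.I)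
        * Complex.exp (Complex.I * θ) := by
    funext θ
    rw [hγ θ]
    push_cast [Complex.ofReal_cos, Complex.ofReal_sin]
    ring
  intro θ
  constructor
  · -- derivative
    have hE : HasDerivAt
        (fun z : ℂ => ((s : ℂ) * Complex.cos ((s : ℂ) * z) - Complex.sin ((s : ℂ) * z) * Complex.I)
          * Complex.exp (Complex.I * z))
        (((s : ℂ) * (-Complex.sin ((s : ℂ) * θ) * s)
            - (Complex.cos ((s : ℂ) * θ) * s) * Complex.I) * Complex.exp (Complex.I * θ)
          + ((s : ℂ) * Complex.cos ((s : ℂ) * θ) - Complex.sin ((s : ℂ) * θ) * Complex.I)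
            * (Complex.exp (Complex.I * θ) * Complex.I)) (θ : ℂ) := by
      have hlin : HasDerivAt (fun z : ℂ => (s : ℂ) * z) (s : ℂ) (θ : ℂ) := by
        simpa using (hasDerivAt_id (θ : ℂ)).const_mul (s : ℂ)
      have hlinI : HasDerivAt (fun z : ℂ => Complex.I * z) Complex.I (θ : ℂ) := by
        simpa using (hasDerivAt_id (θ : ℂ)).const_mul Complex.I
      have hcos : HasDerivAt (fun z : ℂ => Complex.cos ((s : ℂ) * z))
          (-Complex.sin ((s : ℂ) * θ) * s) (θ : ℂ) :=
        (Complex.hasDerivAt_cos ((s : ℂ) * θ)).comp (θ : ℂ) hlin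
      have hsin : HasDerivAt (fun z : ℂ => Complex.sin ((s : ℂ) * z))
          (Complex.cos ((s : ℂ) * θ) * s) (θ : ℂ) :=
        (Complex.hasDerivAt_sin ((s : ℂ) * θ)).comp (θ : ℂ) hlin
      have hexp : HasDerivAt (fun z : ℂ => Complex.exp (Complex.I * z))
          (Complex.exp (Complex.I * θ) * Complex.I) (θ : ℂ) :=
        (Complex.hasDerivAt_exp (Complex.I * θ)).comp (θ : ℂ) hlinI
      exact ((hcos.const_mul (s : ℂ)).sub (hsin.mul_const Complex.I)).mul hexp
    have hθ := hE.comp_ofReal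
    rw [hfun]
    convert hθ using 1
    have hsin' : (Real.sin (s * θ) : ℂ) = Complex.sin ((s : ℂ) * θ) := by
      push_cast [Complex.ofReal_sin]; ring_nf
    have hc : (c : ℂ) = 1 - (s : ℂ) ^ 2 := by rw [hs2]; ring
    rw [hsin', hc]
    linear_combination (Complex.sin ((s : ℂ) * θ) * Complex.exp (Complex.I * θ)) * Complex.I_sq
  · -- support function
    rw [hγ θ]
    have hconj : (starRingEnd ℂ) (-Complex.I * Complex.exp (Complex.I * θ)) =
        Complex.I * Complex.exp (-(Complex.I * θ)) := by
      rw [map_mul, ← Complex.exp_conj]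
      simp [Complex.conj_I, mul_comm]
    rw [hconj]
    have he : Complex.exp (Complex.I * θ) * Complex.exp (-(Complex.I * θ)) = 1 := by
      rw [← Complex.exp_add]; simp
    have hprod : ((s : ℂ) * (Real.cos (s * θ) : ℂ) * Complex.exp (Complex.I * θ)
        - (Real.sin (s * θ) : ℂ) * Complex.I * Complex.exp (Complex.I * θ))
        * (Complex.I * Complex.exp (-(Complex.I * θ)))
        = (s : ℂ) * (Real.cos (s * θ) : ℂ) * Complex.I + (Real.sin (s * θ) : ℂ) := by
      linear_combination (((s : ℂ) * (Real.cos (s * θ) : ℂ) * Complex.I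
          - (Real.sin (s * θ) : ℂ) * Complex.I * Complex.I) * he)
        - ((Real.sin (s * θ) : ℂ)) * Complex.I_sq
    rw [hprod]
    simp [Complex.add_re, Complex.mul_re, Complex.I_re, Complex.I_im, ← Complex.ofReal_mul, Complex.cos_ofReal_im, Complex.sin_ofReal_re]
end
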